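/- arXiv:1205.3765 — 2 statements merged into one kernel-verified Lean document; each statement's English description precedes it below -/
import Mathlib

section
/- Continuity of the Nemytsky (superposition) operator: let f : Ω × ℝ → ℝ be a Carathéodory function (measurable in x for each s, continuous in s for almost every x) satisfying |f(x,s)| ≤ a(x) + b|s|^{p₁(x)/p₂(x)} for all x ∈ Ω and s ∈ ℝ, where a : Ω → ℝ is measurable with a ≥ 0 and ρ_{p₂}(a) < ∞, and b ≥ 0 is a constant. If u and u_n (n ∈ ℕ) are measurable with ρ_{p₁}(u) < ∞, ρ_{p₁}(u_n) < ∞ and |u_n − u|_{p₁(·)} → 0 as n → ∞, then |f(·,u_n(·)) − f(·,u(·))|_{p₂(·)} → 0 as n → ∞. -/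
open MeasureTheory Filter Topology
open scoped ENNReal

/-- The variable exponent modular `ρ_p(u) = ∫_Ω |u(x)|^{p(x)} dx`. -/
noncomputable def modular {N : ℕ} (Ω : Set (EuclideanSpace ℝ (Fin N)))
    (p u : EuclideanSpace ℝ (Fin N) → ℝ) : ℝ≥0∞ :=
  ∫⁻ x in Ω, ENNReal.ofReal (|u x| ^ p x)

/-- The Luxemburg norm `|u|_{p(·)} = inf { λ > 0 : ρ_p(u/λ) ≤ 1 }`. -/
noncomputable def luxNorm {N : ℕ} (Ω : Set (EuclideanSpace ℝ (Fin N)))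
    (p u : EuclideanSpace ℝ (Fin N) → ℝ) : ℝ :=
  sInf {c : ℝ | 0 < c ∧ modular Ω p (fun x => u x / c) ≤ 1}

lemma rpow_add_le_two (A B p M : ℝ) (hA : 0 ≤ A) (hB : 0 ≤ B) (hp : 0 ≤ p) (hM : p ≤ M) :
    (A + B) ^ p ≤ 2 ^ M * (A ^ p + B ^ p) := by
  have hmax : 0 ≤ max A B := le_max_of_le_left hA
  have h1 : A + B ≤ 2 * max A B := by
    rcases le_total A B with h | h
    · simp [max_eq_right h]; linarith
    · simp [max_eq_left h]; linarith
  have h2 : (A + B) ^ p ≤ (2 * max A B) ^ p :=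
    Real.rpow_le_rpow (by linarith) h1 hp
  have h3 : (2 * max A B) ^ p = 2 ^ p * (max A B) ^ p :=
    Real.mul_rpow (by norm_num) hmax
  have h4 : (max A B) ^ p ≤ A ^ p + B ^ p := by
    rcases le_total A B with h | h
    · rw [max_eq_right h]
      have := Real.rpow_nonneg hA p
      linarith
    · rw [max_eq_left h]
      have := Real.rpow_nonneg hB p
      linarith
  have h5 : (2:ℝ) ^ p ≤ 2 ^ M := Real.rpow_le_rpow_of_exponent_le one_le_two hM
  calc (A + B) ^ p ≤ 2 ^ p * (max A B) ^ p := by rw [← h3]; exact h2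
    _ ≤ 2 ^ M * (A ^ p + B ^ p) := by
        have h6 : (0:ℝ) < 2 ^ p := Real.rpow_pos_of_pos (by norm_num) p
        have := Real.rpow_nonneg hmax p
        nlinarith

lemma rpow_add_le_three (A B C p M : ℝ) (hA : 0 ≤ A) (hB : 0 ≤ B) (hC : 0 ≤ C)
    (hp : 0 ≤ p) (hM : p ≤ M) :
    (A + B + C) ^ p ≤ 2 ^ M * (2 ^ M * (A ^ p + B ^ p) + C ^ p) := by
  have h1 := rpow_add_le_two (A + B) C p M (by linarith) hC hp hM
  have h2 := rpow_add_le_two A B p M hA hB hp hM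
  have h6 : (0:ℝ) < 2 ^ M := Real.rpow_pos_of_pos (by norm_num) M
  nlinarith [Real.rpow_nonneg hC p]

lemma caratheodory_aemeasurable {α : Type*} [MeasurableSpace α] (μ : Measure α)
    (f : α → ℝ → ℝ) (hf : ∀ s, Measurable fun x => f x s)
    (hc : ∀ᵐ x ∂μ, Continuous (f x)) (v : α → ℝ) (hv : Measurable v) :
    AEMeasurable (fun x => f x (v x)) μ := by
  set g : ℕ → α → ℝ := fun j x => f x ((⌊v x * 2 ^ j⌋ : ℤ) / 2 ^ j : ℝ) with hg
  have hgm : ∀ j, Measurable (g j) := by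
    intro j
    have hF : Measurable fun p : α × ℤ => f p.1 ((p.2 : ℝ) / 2 ^ j) :=
      measurable_from_prod_countable_left fun z => hf ((z : ℝ) / 2 ^ j)
    exact hF.comp (measurable_id.prodMk (hv.mul_const _).floor)
  have hlim : ∀ᵐ x ∂μ, Tendsto (fun j => g j x) atTop (𝓝 (f x (v x))) := by
    filter_upwards [hc] with x hx
    have hw : Tendsto (fun j => ((⌊v x * 2 ^ j⌋ : ℤ) / 2 ^ j : ℝ)) atTop (𝓝 (v x)) := by
      have hd : ∀ j : ℕ, |((⌊v x * 2 ^ j⌋ : ℤ) / 2 ^ j : ℝ) - v x| ≤ ((2:ℝ) ^ j)⁻¹ := by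
        intro j
        have h2 : (0:ℝ) < 2 ^ j := by positivity
        have hfl : (⌊v x * 2 ^ j⌋ : ℝ) ≤ v x * 2 ^ j := Int.floor_le _
        have hfl2 : v x * 2 ^ j - 1 ≤ (⌊v x * 2 ^ j⌋ : ℝ) := by
          have := Int.lt_floor_add_one (v x * 2 ^ j); linarith
        have e1 : ((⌊v x * 2 ^ j⌋ : ℤ) / 2 ^ j : ℝ) - v x
            = ((⌊v x * 2 ^ j⌋ : ℝ) - v x * 2 ^ j) / 2 ^ j := by field_simp
        have hinv : ((2:ℝ)^j)⁻¹ * 2^j = 1 := inv_mul_cancel₀ h2.ne'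
        rw [abs_le, e1]
        constructor
        · rw [le_div_iff₀ h2]; nlinarith
        · rw [div_le_iff₀ h2]; nlinarith
      have h0 : Tendsto (fun j : ℕ => ((2:ℝ) ^ j)⁻¹) atTop (𝓝 0) := by
        simpa using tendsto_pow_atTop_nhds_zero_of_lt_one (by norm_num : (0:ℝ) ≤ 2⁻¹)
          (by norm_num : (2:ℝ)⁻¹ < 1) |>.congr (fun j => by rw [inv_pow])
      rw [tendsto_iff_dist_tendsto_zero]
      refine squeeze_zero (fun j => dist_nonneg) (fun j => ?_) h0
      rw [Real.dist_eq]; exact hd j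
    exact ((hx.tendsto (v x)).comp hw)
  exact aemeasurable_of_tendsto_metrizable_ae atTop (fun j => (hgm j).aemeasurable) hlim


variable {N : ℕ} {Ω : Set (EuclideanSpace ℝ (Fin N))} {p v : EuclideanSpace ℝ (Fin N) → ℝ}

lemma luxNorm_nonneg : 0 ≤ luxNorm Ω p v :=
  Real.sInf_nonneg fun _ hc => hc.1.le

lemma modular_div_le (hΩ : MeasurableSet Ω) {c t : ℝ} (hc : 0 < c)
    (h : ∀ x ∈ Ω, c ^ t ≤ c ^ p x) :
    modular Ω p (fun x => v x / c) ≤ modular Ω p v * (ENNReal.ofReal (c ^ t))⁻¹ := by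
  have hct : (0:ℝ) < c ^ t := Real.rpow_pos_of_pos hc t
  calc modular Ω p (fun x => v x / c)
      ≤ ∫⁻ x in Ω, ENNReal.ofReal (|v x| ^ p x) * (ENNReal.ofReal (c ^ t))⁻¹ := by
        refine lintegral_mono_ae ?_
        filter_upwards [ae_restrict_mem hΩ] with x hx
        have h1 : |v x / c| ^ p x = |v x| ^ p x / c ^ p x := by
          rw [abs_div, abs_of_pos hc, Real.div_rpow (abs_nonneg _) hc.le]
        have h2 : |v x| ^ p x / c ^ p x ≤ |v x| ^ p x / c ^ t :=
          div_le_div_of_nonneg_left (Real.rpow_nonneg (abs_nonneg _) _) hct (h x hx)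
        calc ENNReal.ofReal (|v x / c| ^ p x)
            ≤ ENNReal.ofReal (|v x| ^ p x / c ^ t) := by
              rw [h1]; exact ENNReal.ofReal_le_ofReal h2
          _ = ENNReal.ofReal (|v x| ^ p x) * (ENNReal.ofReal (c ^ t))⁻¹ := by
              rw [ENNReal.ofReal_div_of_pos hct, div_eq_mul_inv]
    _ = modular Ω p v * (ENNReal.ofReal (c ^ t))⁻¹ :=
        lintegral_mul_const' _ _ (by simp [hct])

lemma modular_le_mul (hΩ : MeasurableSet Ω) {c t : ℝ} (hc : 0 < c)
    (h : ∀ x ∈ Ω, c ^ p x ≤ c ^ t) :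
    modular Ω p v ≤ modular Ω p (fun x => v x / c) * ENNReal.ofReal (c ^ t) := by
  calc modular Ω p v
      ≤ ∫⁻ x in Ω, ENNReal.ofReal (|v x / c| ^ p x) * ENNReal.ofReal (c ^ t) := by
        refine lintegral_mono_ae ?_
        filter_upwards [ae_restrict_mem hΩ] with x hx
        have h1 : |v x| ^ p x = |v x / c| ^ p x * c ^ p x := by
          rw [abs_div, abs_of_pos hc, Real.div_rpow (abs_nonneg _) hc.le,
            div_mul_cancel₀]
          exact (Real.rpow_pos_of_pos hc _).ne'
        have h2 : |v x| ^ p x ≤ |v x / c| ^ p x * c ^ t := by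
          rw [h1]
          exact mul_le_mul_of_nonneg_left (h x hx) (Real.rpow_nonneg (abs_nonneg _) _)
        calc ENNReal.ofReal (|v x| ^ p x)
            ≤ ENNReal.ofReal (|v x / c| ^ p x * c ^ t) := ENNReal.ofReal_le_ofReal h2
          _ = ENNReal.ofReal (|v x / c| ^ p x) * ENNReal.ofReal (c ^ t) :=
              ENNReal.ofReal_mul' (Real.rpow_nonneg hc.le _)
    _ = modular Ω p (fun x => v x / c) * ENNReal.ofReal (c ^ t) :=
        lintegral_mul_const' _ _ ENNReal.ofReal_ne_top

/-- membership in the Luxemburg set from a modular bound -/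
lemma luxNorm_le_of_modular_le (hΩ : MeasurableSet Ω) {M ε : ℝ}
    (hp : ∀ x ∈ Ω, p x ≤ M) (hε : 0 < ε) (hε1 : ε ≤ 1)
    (h : modular Ω p v ≤ ENNReal.ofReal (ε ^ M)) : luxNorm Ω p v ≤ ε := by
  refine csInf_le ⟨0, fun c hc => hc.1.le⟩ ⟨hε, ?_⟩
  have key := modular_div_le (v := v) hΩ hε
    (fun x hx => Real.rpow_le_rpow_of_exponent_ge hε hε1 (hp x hx))
  refine key.trans ?_
  have hpos : (0:ℝ) < ε ^ M := Real.rpow_pos_of_pos hε M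
  calc modular Ω p v * (ENNReal.ofReal (ε ^ M))⁻¹
      ≤ ENNReal.ofReal (ε ^ M) * (ENNReal.ofReal (ε ^ M))⁻¹ := mul_le_mul_left h _
    _ = 1 := ENNReal.mul_inv_cancel (by simp [hpos]) ENNReal.ofReal_ne_top

lemma lux_set_nonempty (hΩ : MeasurableSet Ω) {m : ℝ} (hm : 0 < m)
    (hp : ∀ x ∈ Ω, m ≤ p x) (hfin : modular Ω p v < ⊤) :
    ∃ c : ℝ, 0 < c ∧ modular Ω p (fun x => v x / c) ≤ 1 := by
  set c : ℝ := max 1 ((modular Ω p v).toReal ^ m⁻¹) with hcdef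
  have hc1 : (1:ℝ) ≤ c := le_max_left _ _
  have hc : (0:ℝ) < c := lt_of_lt_of_le one_pos hc1
  refine ⟨c, hc, ?_⟩
  have key := modular_div_le (v := v) hΩ hc
    (fun x hx => Real.rpow_le_rpow_of_exponent_le hc1 (hp x hx))
  refine key.trans ?_
  have hcm : (0:ℝ) < c ^ m := Real.rpow_pos_of_pos hc m
  have hle : modular Ω p v ≤ ENNReal.ofReal (c ^ m) := by
    have h1 : (modular Ω p v).toReal ≤ c ^ m := by
      calc (modular Ω p v).toReal
          = ((modular Ω p v).toReal ^ m⁻¹) ^ m :=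
            (Real.rpow_inv_rpow ENNReal.toReal_nonneg hm.ne').symm
        _ ≤ c ^ m := Real.rpow_le_rpow (Real.rpow_nonneg ENNReal.toReal_nonneg _)
            (le_max_right _ _) hm.le
    calc modular Ω p v = ENNReal.ofReal (modular Ω p v).toReal :=
          (ENNReal.ofReal_toReal hfin.ne).symm
      _ ≤ ENNReal.ofReal (c ^ m) := ENNReal.ofReal_le_ofReal h1
  calc modular Ω p v * (ENNReal.ofReal (c ^ m))⁻¹
      ≤ ENNReal.ofReal (c ^ m) * (ENNReal.ofReal (c ^ m))⁻¹ := mul_le_mul_left hle _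
    _ = 1 := ENNReal.mul_inv_cancel (by simp [hcm]) ENNReal.ofReal_ne_top

lemma modular_le_of_luxset {c m : ℝ} (hΩ : MeasurableSet Ω) (hc : 0 < c) (hc1 : c ≤ 1)
    (hp : ∀ x ∈ Ω, m ≤ p x)
    (hmem : modular Ω p (fun x => v x / c) ≤ 1) :
    modular Ω p v ≤ ENNReal.ofReal (c ^ m) := by
  have key := modular_le_mul (v := v) hΩ hc
    (fun x hx => Real.rpow_le_rpow_of_exponent_ge hc hc1 (hp x hx))
  refine key.trans ?_
  calc modular Ω p (fun x => v x / c) * ENNReal.ofReal (c ^ m)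
      ≤ 1 * ENNReal.ofReal (c ^ m) := mul_le_mul_left hmem _
    _ = ENNReal.ofReal (c ^ m) := one_mul _

lemma modular_tendsto_of_luxNorm (hΩ : MeasurableSet Ω) {m : ℝ} (hm : 0 < m)
    (hp : ∀ x ∈ Ω, m ≤ p x) (d : ℕ → EuclideanSpace ℝ (Fin N) → ℝ)
    (hfin : ∀ n, modular Ω p (d n) < ⊤)
    (hlux : Tendsto (fun n => luxNorm Ω p (d n)) atTop (𝓝 0)) :
    Tendsto (fun n => modular Ω p (d n)) atTop (𝓝 0) := by
  rw [ENNReal.tendsto_nhds_zero]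
  intro ε hε
  obtain ⟨δ, hδ0, hδ1, hδε⟩ : ∃ δ : ℝ, 0 < δ ∧ δ ≤ 1 ∧ ENNReal.ofReal (δ ^ m) ≤ ε := by
    rcases eq_or_ne ε ⊤ with rfl | htop
    · exact ⟨1, one_pos, le_refl 1, le_top⟩
    · have hεt : 0 < ε.toReal := ENNReal.toReal_pos hε.ne' htop
      refine ⟨min 1 (ε.toReal ^ m⁻¹), lt_min one_pos (Real.rpow_pos_of_pos hεt _),
        min_le_left _ _, ?_⟩
      have h1 : (min 1 (ε.toReal ^ m⁻¹)) ^ m ≤ (ε.toReal ^ m⁻¹) ^ m :=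
        Real.rpow_le_rpow (le_min zero_le_one (Real.rpow_nonneg hεt.le _))
          (min_le_right _ _) hm.le
      rw [Real.rpow_inv_rpow hεt.le hm.ne'] at h1
      calc ENNReal.ofReal ((min 1 (ε.toReal ^ m⁻¹)) ^ m)
          ≤ ENNReal.ofReal ε.toReal := ENNReal.ofReal_le_ofReal h1
        _ = ε := ENNReal.ofReal_toReal htop
  filter_upwards [hlux.eventually_lt_const hδ0] with n hn
  unfold luxNorm at hn
  obtain ⟨c0, hc0⟩ := lux_set_nonempty hΩ hm hp (hfin n)
  obtain ⟨c, hcmem, hcδ⟩ := (csInf_lt_iff ⟨0, fun c hc => hc.1.le⟩ ⟨c0, hc0⟩).mp hn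
  have h1 := modular_le_of_luxset hΩ hcmem.1 (hcδ.le.trans hδ1) hp hcmem.2
  exact h1.trans (le_trans (ENNReal.ofReal_le_ofReal
    (Real.rpow_le_rpow hcmem.1.le hcδ.le hm.le)) hδε)

lemma luxNorm_tendsto_of_modular (hΩ : MeasurableSet Ω) {M : ℝ}
    (hp : ∀ x ∈ Ω, p x ≤ M) (d : ℕ → EuclideanSpace ℝ (Fin N) → ℝ)
    (h : Tendsto (fun n => modular Ω p (d n)) atTop (𝓝 0)) :
    Tendsto (fun n => luxNorm Ω p (d n)) atTop (𝓝 0) := by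
  rw [Metric.tendsto_atTop]
  intro ε hε
  set δ : ℝ := min ε 1 / 2 with hδdef
  have hδ0 : 0 < δ := by positivity
  have hδ1 : δ ≤ 1 := by
    have : min ε 1 ≤ 1 := min_le_right _ _
    simp only [hδdef]; linarith
  have hδε : δ < ε := by
    have : min ε 1 ≤ ε := min_le_left _ _
    simp only [hδdef]; linarith
  have hev : ∀ᶠ n in atTop, modular Ω p (d n) ≤ ENNReal.ofReal (δ ^ M) :=
    ENNReal.tendsto_nhds_zero.mp h _
      (ENNReal.ofReal_pos.mpr (Real.rpow_pos_of_pos hδ0 _))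
  obtain ⟨n₀, hn₀⟩ := eventually_atTop.mp hev
  refine ⟨n₀, fun n hn => ?_⟩
  have := luxNorm_le_of_modular_le (v := d n) hΩ hp hδ0 hδ1 (hn₀ n hn)
  rw [Real.dist_eq, sub_zero, abs_of_nonneg luxNorm_nonneg]
  exact lt_of_le_of_lt this hδε

lemma modular_sub_lt_top (hΩ : MeasurableSet Ω) {M : ℝ}
    (hp : ∀ x ∈ Ω, 0 ≤ p x ∧ p x ≤ M) {w z : EuclideanSpace ℝ (Fin N) → ℝ}
    (hw : Measurable w) (hpm : Measurable p)
    (h1 : modular Ω p w < ⊤) (h2 : modular Ω p z < ⊤) :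
    modular Ω p (fun x => w x - z x) < ⊤ := by
  have key : modular Ω p (fun x => w x - z x)
      ≤ ∫⁻ x in Ω, ENNReal.ofReal (2 ^ M) *
        (ENNReal.ofReal (|w x| ^ p x) + ENNReal.ofReal (|z x| ^ p x)) := by
    refine lintegral_mono_ae ?_
    filter_upwards [ae_restrict_mem hΩ] with x hx
    have hr : |w x - z x| ^ p x ≤ 2 ^ M * (|w x| ^ p x + |z x| ^ p x) := by
      calc |w x - z x| ^ p x ≤ (|w x| + |z x|) ^ p x :=
            Real.rpow_le_rpow (abs_nonneg _) (abs_sub _ _) (hp x hx).1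
        _ ≤ 2 ^ M * (|w x| ^ p x + |z x| ^ p x) :=
            rpow_add_le_two _ _ _ _ (abs_nonneg _) (abs_nonneg _) (hp x hx).1 (hp x hx).2
    calc ENNReal.ofReal (|w x - z x| ^ p x)
        ≤ ENNReal.ofReal (2 ^ M * (|w x| ^ p x + |z x| ^ p x)) :=
          ENNReal.ofReal_le_ofReal hr
      _ = ENNReal.ofReal (2 ^ M) * ENNReal.ofReal (|w x| ^ p x + |z x| ^ p x) :=
          ENNReal.ofReal_mul (Real.rpow_nonneg (by norm_num) _)
      _ ≤ ENNReal.ofReal (2 ^ M) *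
          (ENNReal.ofReal (|w x| ^ p x) + ENNReal.ofReal (|z x| ^ p x)) :=
          mul_le_mul_right ENNReal.ofReal_add_le _
  refine lt_of_le_of_lt key ?_
  rw [lintegral_const_mul' _ _ ENNReal.ofReal_ne_top,
    lintegral_add_left (hw.abs.pow hpm).ennreal_ofReal]
  exact ENNReal.mul_lt_top ENNReal.ofReal_lt_top (ENNReal.add_lt_top.mpr ⟨h1, h2⟩)

lemma nemytsky_pointwise_bound (A B0 s fs ft U D p q M1 M2 : ℝ)
    (hA : 0 ≤ A) (hB0 : 0 ≤ B0) (hU : 0 ≤ U) (hD : 0 ≤ D)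
    (hp : 0 < p) (hpM : p ≤ M2) (hq0 : 0 ≤ q) (hqM : q ≤ M1)
    (hs : |s| ≤ U + D)
    (hfs : |fs| ≤ A + B0 * |s| ^ (q / p))
    (hft : |ft| ≤ A + B0 * U ^ (q / p)) :
    |fs - ft| ^ p ≤
      (2 ^ M2 * (2 ^ M2 + 2 ^ M2)) * A ^ p
      + (2 ^ M2 * (2 ^ M2 * ((max B0 1) ^ M2 * (2 ^ M1 + 1)))) * U ^ q
      + (2 ^ M2 * (2 ^ M2 * ((max B0 1) ^ M2 * 2 ^ M1))) * D ^ q := by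
  set B : ℝ := (max B0 1) ^ M2 with hBdef
  have hB1 : (1:ℝ) ≤ max B0 1 := le_max_right _ _
  have hBpos : (0:ℝ) < B := Real.rpow_pos_of_pos (lt_of_lt_of_le one_pos hB1) _
  have hBp : B0 ^ p ≤ B := by
    calc B0 ^ p ≤ (max B0 1) ^ p := Real.rpow_le_rpow hB0 (le_max_left _ _) hp.le
      _ ≤ B := Real.rpow_le_rpow_of_exponent_le hB1 hpM
  have hXnn : 0 ≤ A + B0 * |s| ^ (q / p) :=
    add_nonneg hA (mul_nonneg hB0 (Real.rpow_nonneg (abs_nonneg _) _))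
  have hYnn : 0 ≤ A + B0 * U ^ (q / p) :=
    add_nonneg hA (mul_nonneg hB0 (Real.rpow_nonneg hU _))
  have h0 : |fs - ft| ≤ (A + B0 * |s| ^ (q / p)) + (A + B0 * U ^ (q / p)) :=
    (abs_sub _ _).trans (add_le_add hfs hft)
  have h1 : |fs - ft| ^ p ≤ ((A + B0 * |s| ^ (q / p)) + (A + B0 * U ^ (q / p))) ^ p :=
    Real.rpow_le_rpow (abs_nonneg _) h0 hp.le
  have h2 := rpow_add_le_two _ _ p M2 hXnn hYnn hp.le hpM
  have hqp : q / p * p = q := div_mul_cancel₀ q hp.ne'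
  have hsq : (B0 * |s| ^ (q / p)) ^ p = B0 ^ p * |s| ^ q := by
    rw [Real.mul_rpow hB0 (Real.rpow_nonneg (abs_nonneg _) _),
      ← Real.rpow_mul (abs_nonneg _), hqp]
  have hUq : (B0 * U ^ (q / p)) ^ p = B0 ^ p * U ^ q := by
    rw [Real.mul_rpow hB0 (Real.rpow_nonneg hU _), ← Real.rpow_mul hU, hqp]
  have h3 := rpow_add_le_two A (B0 * |s| ^ (q / p)) p M2 hA
    (mul_nonneg hB0 (Real.rpow_nonneg (abs_nonneg _) _)) hp.le hpM
  have h4 := rpow_add_le_two A (B0 * U ^ (q / p)) p M2 hA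
    (mul_nonneg hB0 (Real.rpow_nonneg hU _)) hp.le hpM
  rw [hsq] at h3
  rw [hUq] at h4
  have h5 : |s| ^ q ≤ 2 ^ M1 * (U ^ q + D ^ q) :=
    (Real.rpow_le_rpow (abs_nonneg _) hs hq0).trans
      (rpow_add_le_two U D q M1 hU hD hq0 hqM)
  -- combine
  have hsqnn : 0 ≤ |s| ^ q := Real.rpow_nonneg (abs_nonneg _) _
  have hUqnn : 0 ≤ U ^ q := Real.rpow_nonneg hU _
  have hDqnn : 0 ≤ D ^ q := Real.rpow_nonneg hD _
  have hApnn : 0 ≤ A ^ p := Real.rpow_nonneg hA _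
  have h2M2 : (0:ℝ) < 2 ^ M2 := Real.rpow_pos_of_pos two_pos _
  have h2M1 : (0:ℝ) < 2 ^ M1 := Real.rpow_pos_of_pos two_pos _
  have h6 : B0 ^ p * |s| ^ q ≤ B * (2 ^ M1 * (U ^ q + D ^ q)) :=
    mul_le_mul hBp h5 hsqnn hBpos.le
  have h7 : B0 ^ p * U ^ q ≤ B * U ^ q :=
    mul_le_mul_of_nonneg_right hBp hUqnn
  have hX : (A + B0 * |s| ^ (q / p)) ^ p ≤ 2 ^ M2 * (A ^ p + B * (2 ^ M1 * (U ^ q + D ^ q))) :=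
    h3.trans (mul_le_mul_of_nonneg_left (by linarith) h2M2.le)
  have hY : (A + B0 * U ^ (q / p)) ^ p ≤ 2 ^ M2 * (A ^ p + B * U ^ q) :=
    h4.trans (mul_le_mul_of_nonneg_left (by linarith) h2M2.le)
  calc |fs - ft| ^ p
      ≤ 2 ^ M2 * ((A + B0 * |s| ^ (q / p)) ^ p + (A + B0 * U ^ (q / p)) ^ p) :=
        h1.trans h2
    _ ≤ 2 ^ M2 * (2 ^ M2 * (A ^ p + B * (2 ^ M1 * (U ^ q + D ^ q)))
          + 2 ^ M2 * (A ^ p + B * U ^ q)) :=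
        mul_le_mul_of_nonneg_left (add_le_add hX hY) h2M2.le
    _ = (2 ^ M2 * (2 ^ M2 + 2 ^ M2)) * A ^ p
        + (2 ^ M2 * (2 ^ M2 * (B * (2 ^ M1 + 1)))) * U ^ q
        + (2 ^ M2 * (2 ^ M2 * (B * 2 ^ M1))) * D ^ q := by ring

lemma key_modular_tendsto {N : ℕ} {Ω : Set (EuclideanSpace ℝ (Fin N))}
    (hΩ : MeasurableSet Ω)
    {p₁ p₂ : EuclideanSpace ℝ (Fin N) → ℝ}
    (hp₁ : Measurable p₁) (hp₂ : Measurable p₂)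
    {pm₁ pM₁ pm₂ pM₂ : ℝ} (hpm₁ : 1 < pm₁) (hpm₂ : 1 < pm₂)
    (hb₁ : ∀ x ∈ Ω, pm₁ ≤ p₁ x ∧ p₁ x ≤ pM₁)
    (hb₂ : ∀ x ∈ Ω, pm₂ ≤ p₂ x ∧ p₂ x ≤ pM₂)
    {f : EuclideanSpace ℝ (Fin N) → ℝ → ℝ}
    (hfmeas : ∀ s : ℝ, Measurable (fun x => f x s))
    (hfcont : ∀ᵐ x ∂(volume.restrict Ω), Continuous (fun s => f x s))
    {a : EuclideanSpace ℝ (Fin N) → ℝ} (ha : Measurable a) (ha0 : ∀ x ∈ Ω, 0 ≤ a x)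
    (haρ : modular Ω p₂ a < ⊤) {b : ℝ} (hb : 0 ≤ b)
    (hgrowth : ∀ x ∈ Ω, ∀ s : ℝ, |f x s| ≤ a x + b * |s| ^ (p₁ x / p₂ x))
    {u : EuclideanSpace ℝ (Fin N) → ℝ} (hu : Measurable u)
    (hρu : modular Ω p₁ u < ⊤)
    (v : ℕ → EuclideanSpace ℝ (Fin N) → ℝ) (hv : ∀ k, Measurable (v k))
    (hmod : ∀ k, modular Ω p₁ (fun x => v k x - u x) ≤ (2⁻¹ : ℝ≥0∞) ^ k) :
    Tendsto (fun k => modular Ω p₂ (fun x => f x (v k x) - f x (u x))) atTop (𝓝 0) := by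
  set F : ℕ → EuclideanSpace ℝ (Fin N) → ℝ≥0∞ :=
    fun k x => ENNReal.ofReal (|v k x - u x| ^ p₁ x) with hFdef
  have hFmeas : ∀ k, Measurable (F k) :=
    fun k => (((hv k).sub hu).abs.pow hp₁).ennreal_ofReal
  set S : EuclideanSpace ℝ (Fin N) → ℝ≥0∞ := fun x => ∑' k, F k x with hSdef
  have hSmeas : Measurable S := Measurable.ennreal_tsum hFmeas
  have hSint : ∫⁻ x in Ω, S x ≤ 2 := by
    rw [hSdef]
    rw [lintegral_tsum fun k => (hFmeas k).aemeasurable]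
    calc ∑' k : ℕ, ∫⁻ x in Ω, F k x ≤ ∑' k : ℕ, (2⁻¹ : ℝ≥0∞) ^ k :=
          ENNReal.tsum_le_tsum (fun k => hmod k)
      _ = 2 := by
          rw [ENNReal.tsum_geometric, ENNReal.one_sub_inv_two]
          simp
  have hSne : (∫⁻ x in Ω, S x) ≠ ⊤ := (lt_of_le_of_lt hSint (by norm_num)).ne
  have hSfin : ∀ᵐ x ∂(volume.restrict Ω), S x < ⊤ := ae_lt_top hSmeas hSne
  -- constants for the domination
  set B : ℝ := (max b 1) ^ pM₂ with hBdef
  set C1 : ℝ := 2 ^ pM₂ * (2 ^ pM₂ + 2 ^ pM₂) with hC1def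
  set C2 : ℝ := 2 ^ pM₂ * (2 ^ pM₂ * (B * (2 ^ pM₁ + 1))) with hC2def
  set C3 : ℝ := 2 ^ pM₂ * (2 ^ pM₂ * (B * 2 ^ pM₁)) with hC3def
  have hC1 : 0 ≤ C1 := by
    have := Real.rpow_pos_of_pos (two_pos (α := ℝ)) pM₂; positivity
  have hC2 : 0 ≤ C2 := by
    have h1 := Real.rpow_pos_of_pos (two_pos (α := ℝ)) pM₂
    have h2 := Real.rpow_pos_of_pos (two_pos (α := ℝ)) pM₁
    have h3 := Real.rpow_pos_of_pos (lt_of_lt_of_le one_pos (le_max_right b 1)) pM₂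
    positivity
  have hC3 : 0 ≤ C3 := by
    have h1 := Real.rpow_pos_of_pos (two_pos (α := ℝ)) pM₂
    have h2 := Real.rpow_pos_of_pos (two_pos (α := ℝ)) pM₁
    have h3 := Real.rpow_pos_of_pos (lt_of_lt_of_le one_pos (le_max_right b 1)) pM₂
    positivity
  set bound : EuclideanSpace ℝ (Fin N) → ℝ≥0∞ := fun x =>
    ENNReal.ofReal C1 * ENNReal.ofReal (|a x| ^ p₂ x)
    + ENNReal.ofReal C2 * ENNReal.ofReal (|u x| ^ p₁ x)
    + ENNReal.ofReal C3 * S x with hbounddef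
  set G : ℕ → EuclideanSpace ℝ (Fin N) → ℝ≥0∞ :=
    fun k x => ENNReal.ofReal (|f x (v k x) - f x (u x)| ^ p₂ x) with hGdef
  have hGmeas : ∀ k, AEMeasurable (G k) (volume.restrict Ω) := by
    intro k
    have h1 : AEMeasurable (fun x => f x (v k x)) (volume.restrict Ω) :=
      caratheodory_aemeasurable _ f hfmeas hfcont (v k) (hv k)
    have h2 : AEMeasurable (fun x => f x (u x)) (volume.restrict Ω) :=
      caratheodory_aemeasurable _ f hfmeas hfcont u hu
    exact ((continuous_abs.measurable.comp_aemeasurable (h1.sub h2)).pow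
      hp₂.aemeasurable).ennreal_ofReal
  have h_bound : ∀ k, G k ≤ᵐ[volume.restrict Ω] bound := by
    intro k
    filter_upwards [ae_restrict_mem hΩ] with x hx
    have hp2x : 0 < p₂ x := lt_of_lt_of_le (lt_trans one_pos hpm₂) (hb₂ x hx).1
    have hp1x : 0 ≤ p₁ x := (le_trans (le_of_lt (lt_trans one_pos hpm₁)) (hb₁ x hx).1)
    have hs : |v k x| ≤ |u x| + |v k x - u x| := by
      calc |v k x| = |u x + (v k x - u x)| := by ring_nf
        _ ≤ |u x| + |v k x - u x| := abs_add_le _ _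
    have hax : a x = |a x| := (abs_of_nonneg (ha0 x hx)).symm
    have hkey := nemytsky_pointwise_bound (a x) b (v k x) (f x (v k x)) (f x (u x))
      (|u x|) (|v k x - u x|) (p₂ x) (p₁ x) pM₁ pM₂
      (ha0 x hx) hb (abs_nonneg _) (abs_nonneg _)
      hp2x (hb₂ x hx).2 hp1x (hb₁ x hx).2 hs
      (hgrowth x hx (v k x)) (hgrowth x hx (u x))
    rw [← hBdef, ← hC1def, ← hC2def, ← hC3def, hax] at hkey
    calc G k x
        ≤ ENNReal.ofReal (C1 * |a x| ^ p₂ x + C2 * |u x| ^ p₁ x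
            + C3 * |v k x - u x| ^ p₁ x) := by
          simp only [hGdef]
          exact ENNReal.ofReal_le_ofReal hkey
      _ ≤ ENNReal.ofReal (C1 * |a x| ^ p₂ x) + ENNReal.ofReal (C2 * |u x| ^ p₁ x)
            + ENNReal.ofReal (C3 * |v k x - u x| ^ p₁ x) :=
          le_trans ENNReal.ofReal_add_le (add_le_add_left ENNReal.ofReal_add_le _)
      _ = ENNReal.ofReal C1 * ENNReal.ofReal (|a x| ^ p₂ x)
            + ENNReal.ofReal C2 * ENNReal.ofReal (|u x| ^ p₁ x)
            + ENNReal.ofReal C3 * F k x := by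
          simp only [hFdef]
          rw [ENNReal.ofReal_mul hC1, ENNReal.ofReal_mul hC2, ENNReal.ofReal_mul hC3]
      _ ≤ bound x := by
          simp only [hbounddef, hSdef]
          exact add_le_add_right (mul_le_mul_right (ENNReal.le_tsum k) _) _
  have h_fin : (∫⁻ x in Ω, bound x ∂volume) ≠ ⊤ := by
    have hmeas1 : Measurable fun x =>
        ENNReal.ofReal C1 * ENNReal.ofReal (|a x| ^ p₂ x) :=
      measurable_const.mul (ha.abs.pow hp₂).ennreal_ofReal
    have hmeas2 : Measurable fun x =>
        ENNReal.ofReal C2 * ENNReal.ofReal (|u x| ^ p₁ x) :=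
      measurable_const.mul (hu.abs.pow hp₁).ennreal_ofReal
    have heq : (∫⁻ x in Ω, bound x ∂volume)
        = ENNReal.ofReal C1 * modular Ω p₂ a + ENNReal.ofReal C2 * modular Ω p₁ u
          + ENNReal.ofReal C3 * ∫⁻ x in Ω, S x := by
      simp only [hbounddef]
      rw [lintegral_add_left (show Measurable fun x => ENNReal.ofReal C1 * ENNReal.ofReal (|a x| ^ p₂ x)
          + ENNReal.ofReal C2 * ENNReal.ofReal (|u x| ^ p₁ x) from hmeas1.add hmeas2), lintegral_add_left hmeas1,
        lintegral_const_mul' _ _ ENNReal.ofReal_ne_top,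
        lintegral_const_mul' _ _ ENNReal.ofReal_ne_top,
        lintegral_const_mul' _ _ ENNReal.ofReal_ne_top]
      rfl
    rw [heq]
    refine (ENNReal.add_lt_top.mpr ⟨ENNReal.add_lt_top.mpr ⟨?_, ?_⟩, ?_⟩).ne
    · exact ENNReal.mul_lt_top ENNReal.ofReal_lt_top haρ
    · exact ENNReal.mul_lt_top ENNReal.ofReal_lt_top hρu
    · exact ENNReal.mul_lt_top ENNReal.ofReal_lt_top (lt_top_iff_ne_top.mpr hSne)
  have h_lim : ∀ᵐ x ∂(volume.restrict Ω),
      Tendsto (fun k => G k x) atTop (𝓝 0) := by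
    filter_upwards [ae_restrict_mem hΩ, hfcont, hSfin] with x hx hcx hSx
    have hp1x : 0 < p₁ x := lt_of_lt_of_le (lt_trans one_pos hpm₁) (hb₁ x hx).1
    have hp2x : 0 < p₂ x := lt_of_lt_of_le (lt_trans one_pos hpm₂) (hb₂ x hx).1
    have h1 : Tendsto (fun k => F k x) atTop (𝓝 0) := by
      refine ENNReal.tendsto_atTop_zero_of_tsum_ne_top ?_
      simp only [hSdef] at hSx
      exact hSx.ne
    have h2 : Tendsto (fun k => |v k x - u x| ^ p₁ x) atTop (𝓝 0) := by
      have ht := (ENNReal.tendsto_toReal (by simp : (0:ℝ≥0∞) ≠ ⊤)).comp h1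
      simp only [ENNReal.toReal_zero] at ht
      refine ht.congr fun k => ?_
      simp only [Function.comp, hFdef]
      exact ENNReal.toReal_ofReal (Real.rpow_nonneg (abs_nonneg _) _)
    have h3 : Tendsto (fun k => |v k x - u x|) atTop (𝓝 0) := by
      have hc : ContinuousAt (fun t : ℝ => t ^ (p₁ x)⁻¹) 0 :=
        Real.continuousAt_rpow_const 0 _ (Or.inr (inv_nonneg.mpr hp1x.le))
      have ht := hc.tendsto.comp h2
      rw [Real.zero_rpow (inv_ne_zero hp1x.ne')] at ht
      refine ht.congr fun k => ?_
      exact Real.rpow_rpow_inv (abs_nonneg _) hp1x.ne'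
    have h4 : Tendsto (fun k => v k x) atTop (𝓝 (u x)) := by
      rw [tendsto_iff_dist_tendsto_zero]
      simpa [Real.dist_eq] using h3
    have h5 : Tendsto (fun k => f x (v k x)) atTop (𝓝 (f x (u x))) :=
      (hcx.tendsto (u x)).comp h4
    have h6 : Tendsto (fun k => |f x (v k x) - f x (u x)|) atTop (𝓝 0) := by
      have := (h5.sub (tendsto_const_nhds (x := f x (u x)))).abs
      simpa using this
    have h7 : Tendsto (fun k => |f x (v k x) - f x (u x)| ^ p₂ x) atTop (𝓝 0) := by
      have hc : ContinuousAt (fun t : ℝ => t ^ p₂ x) 0 :=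
        Real.continuousAt_rpow_const 0 _ (Or.inr hp2x.le)
      have ht := hc.tendsto.comp h6
      rwa [Real.zero_rpow hp2x.ne'] at ht
    have ht := (ENNReal.continuous_ofReal.tendsto 0).comp h7
    simp only [ENNReal.ofReal_zero] at ht
    exact ht.congr fun k => rfl
  have hdct := tendsto_lintegral_of_dominated_convergence' bound hGmeas h_bound h_fin
    (by filter_upwards [h_lim] with x hx using hx)
  simp only [lintegral_zero] at hdct
  exact hdct


/-- Continuity of the Nemytsky operator `u ↦ f(·, u(·))` from `L^{p₁(·)}` to `L^{p₂(·)}`. -/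
theorem nemytsky_continuous {N : ℕ} (Ω : Set (EuclideanSpace ℝ (Fin N)))
    (hΩ : MeasurableSet Ω)
    (p₁ p₂ : EuclideanSpace ℝ (Fin N) → ℝ)
    (hp₁ : Measurable p₁) (hp₂ : Measurable p₂)
    (pm₁ pM₁ pm₂ pM₂ : ℝ) (hpm₁ : 1 < pm₁) (hpm₂ : 1 < pm₂)
    (hb₁ : ∀ x ∈ Ω, pm₁ ≤ p₁ x ∧ p₁ x ≤ pM₁)
    (hb₂ : ∀ x ∈ Ω, pm₂ ≤ p₂ x ∧ p₂ x ≤ pM₂)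
    (f : EuclideanSpace ℝ (Fin N) → ℝ → ℝ)
    (hfmeas : ∀ s : ℝ, Measurable (fun x => f x s))
    (hfcont : ∀ᵐ x ∂(volume.restrict Ω), Continuous (fun s => f x s))
    (a : EuclideanSpace ℝ (Fin N) → ℝ) (ha : Measurable a) (ha0 : ∀ x ∈ Ω, 0 ≤ a x)
    (haρ : modular Ω p₂ a < ⊤) (b : ℝ) (hb : 0 ≤ b)
    (hgrowth : ∀ x ∈ Ω, ∀ s : ℝ, |f x s| ≤ a x + b * |s| ^ (p₁ x / p₂ x))
    (u : EuclideanSpace ℝ (Fin N) → ℝ) (un : ℕ → EuclideanSpace ℝ (Fin N) → ℝ)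
    (hu : Measurable u) (hun : ∀ n, Measurable (un n))
    (hρu : modular Ω p₁ u < ⊤) (hρun : ∀ n, modular Ω p₁ (un n) < ⊤)
    (hconv : Tendsto (fun n => luxNorm Ω p₁ (fun x => un n x - u x)) atTop (𝓝 0)) :
    Tendsto (fun n => luxNorm Ω p₂ (fun x => f x (un n x) - f x (u x))) atTop (𝓝 0) := by
  have hpm₁0 : (0:ℝ) < pm₁ := lt_trans one_pos hpm₁
  -- Step 1: the p₁-modulars of the differences tend to zero.
  have hd_fin : ∀ n, modular Ω p₁ (fun x => un n x - u x) < ⊤ := fun n =>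
    modular_sub_lt_top hΩ
      (fun x hx => ⟨le_trans hpm₁0.le (hb₁ x hx).1, (hb₁ x hx).2⟩)
      (hun n) hp₁ (hρun n) hρu
  have hmod1 : Tendsto (fun n => modular Ω p₁ (fun x => un n x - u x)) atTop (𝓝 0) :=
    modular_tendsto_of_luxNorm hΩ hpm₁0 (fun x hx => (hb₁ x hx).1) _ hd_fin hconv
  -- Step 2: subsequence principle
  refine tendsto_of_subseq_tendsto fun ns hns => ?_
  have h2 : Tendsto (fun n => modular Ω p₁ (fun x => un (ns n) x - u x)) atTop (𝓝 0) :=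
    hmod1.comp hns
  have hev : ∀ k : ℕ, ∃ m : ℕ,
      modular Ω p₁ (fun x => un (ns m) x - u x) ≤ (2⁻¹ : ℝ≥0∞) ^ k := by
    intro k
    have hpos : (0:ℝ≥0∞) < (2⁻¹ : ℝ≥0∞) ^ k := by
      apply ENNReal.pow_pos
      simp
    exact (ENNReal.tendsto_nhds_zero.mp h2 _ hpos).exists
  set ms : ℕ → ℕ := fun k => (hev k).choose with hmsdef
  have hms : ∀ k, modular Ω p₁ (fun x => un (ns (ms k)) x - u x) ≤ (2⁻¹ : ℝ≥0∞) ^ k :=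
    fun k => (hev k).choose_spec
  refine ⟨ms, ?_⟩
  have hkey := key_modular_tendsto hΩ hp₁ hp₂ hpm₁ hpm₂ hb₁ hb₂ hfmeas hfcont ha ha0 haρ
    hb hgrowth hu hρu (fun k => un (ns (ms k))) (fun k => hun _) hms
  exact luxNorm_tendsto_of_modular hΩ (fun x hx => (hb₂ x hx).2) _ hkey
end

section
/- Characterization of norm convergence by convergence in measure plus modular convergence: suppose Ω has finite Lebesgue measure and u, u_k (k ∈ ℕ) are measurable real-valued functions on Ω with ρ_p(u) < ∞ and ρ_p(u_k) < ∞ for all k. Then lim_{k→∞} |u_k − u|_{p(·)} = 0 if and only if u_k → u in measure on Ω (i.e., for every ε > 0, the Lebesgue measure of {x ∈ Ω : |u_k(x) − u(x)| ≥ ε} tends to 0 as k → ∞) and lim_{k→∞} ρ_p(u_k) = ρ_p(u). -/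
open MeasureTheory Filter Topology
open scoped ENNReal

/-- Generalized dominated convergence for `lintegral`. -/
theorem lintegral_tendsto_of_dominated' {α : Type*} [MeasurableSpace α] {μ : Measure α}
    {F : ℕ → α → ℝ≥0∞} {f : α → ℝ≥0∞} {G : ℕ → α → ℝ≥0∞} {g : α → ℝ≥0∞}
    (hFm : ∀ k, Measurable (F k)) (hfm : Measurable f)
    (hGm : ∀ k, Measurable (G k))
    (hle : ∀ k, F k ≤ᵐ[μ] G k)
    (hFlim : ∀ᵐ x ∂μ, Tendsto (fun k => F k x) atTop (𝓝 (f x)))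
    (hGlim : ∀ᵐ x ∂μ, Tendsto (fun k => G k x) atTop (𝓝 (g x)))
    (hgx : ∀ᵐ x ∂μ, g x ≠ ∞)
    (hGfin : ∀ k, ∫⁻ x, G k x ∂μ ≠ ∞) (hgfin : ∫⁻ x, g x ∂μ ≠ ∞)
    (hGtend : Tendsto (fun k => ∫⁻ x, G k x ∂μ) atTop (𝓝 (∫⁻ x, g x ∂μ))) :
    Tendsto (fun k => ∫⁻ x, F k x ∂μ) atTop (𝓝 (∫⁻ x, f x ∂μ)) := by
  have hfg : f ≤ᵐ[μ] g := by
    filter_upwards [ae_all_iff.2 hle, hFlim, hGlim] with x h1 h2 h3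
    exact le_of_tendsto_of_tendsto' h2 h3 h1
  have hffin : ∫⁻ x, f x ∂μ ≠ ∞ := (lt_of_le_of_lt (lintegral_mono_ae hfg) hgfin.lt_top).ne
  have hFfin : ∀ k, ∫⁻ x, F k x ∂μ ≠ ∞ := fun k =>
    (lt_of_le_of_lt (lintegral_mono_ae (hle k)) (hGfin k).lt_top).ne
  have h1 : ∫⁻ x, f x ∂μ ≤ liminf (fun k => ∫⁻ x, F k x ∂μ) atTop := by
    calc ∫⁻ x, f x ∂μ = ∫⁻ x, liminf (fun k => F k x) atTop ∂μ :=
          lintegral_congr_ae (hFlim.mono fun x hx => hx.liminf_eq.symm)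
      _ ≤ liminf (fun k => ∫⁻ x, F k x ∂μ) atTop := lintegral_liminf_le hFm
  have h2 : ∫⁻ x, g x ∂μ - ∫⁻ x, f x ∂μ ≤
      liminf (fun k => ∫⁻ x, G k x ∂μ - ∫⁻ x, F k x ∂μ) atTop := by
    have hsub : ∀ k, ∫⁻ x, G k x ∂μ - ∫⁻ x, F k x ∂μ = ∫⁻ x, G k x - F k x ∂μ := fun k =>
      (lintegral_sub (hFm k) (hFfin k) (hle k)).symm
    simp_rw [hsub]
    calc ∫⁻ x, g x ∂μ - ∫⁻ x, f x ∂μ = ∫⁻ x, g x - f x ∂μ :=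
          (lintegral_sub hfm hffin hfg).symm
      _ = ∫⁻ x, liminf (fun k => G k x - F k x) atTop ∂μ := by
          refine lintegral_congr_ae ?_
          filter_upwards [hFlim, hGlim, hgx] with x h2 h3 h4
          exact ((ENNReal.Tendsto.sub h3 h2 (Or.inl h4)).liminf_eq).symm
      _ ≤ liminf (fun k => ∫⁻ x, G k x - F k x ∂μ) atTop :=
          lintegral_liminf_le fun k => (hGm k).sub (hFm k)
  have h3 : limsup (fun k => ∫⁻ x, F k x ∂μ) atTop ≤ ∫⁻ x, f x ∂μ := by
    set a := ∫⁻ x, g x ∂μ with ha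
    set c := ∫⁻ x, f x ∂μ with hc
    refine ENNReal.le_of_forall_pos_le_add fun ε hε _ => ?_
    set δ := (ε : ℝ≥0∞) / 2 with hδdef
    have hδ : 0 < δ := ENNReal.div_pos (by exact_mod_cast hε.ne') (by norm_num)
    have hδε : c + δ + δ = c + ε := by rw [add_assoc, ENNReal.add_halves]
    have hev1 : ∀ᶠ k in atTop, ∫⁻ x, G k x ∂μ ≤ a + δ :=
      hGtend.eventually_le_const (ENNReal.lt_add_right hgfin hδ.ne')
    have hev2 : ∀ᶠ k in atTop, a - c - δ ≤ ∫⁻ x, G k x ∂μ - ∫⁻ x, F k x ∂μ := by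
      rcases le_or_gt (a - c) δ with h | h
      · exact Eventually.of_forall fun k => by simp [tsub_eq_zero_of_le h]
      · have hlt : a - c - δ < liminf (fun k => ∫⁻ x, G k x ∂μ - ∫⁻ x, F k x ∂μ) atTop :=
          lt_of_lt_of_le (ENNReal.sub_lt_self (ENNReal.sub_ne_top hgfin)
            (hδ.trans h).ne' hδ.ne') h2
        filter_upwards [eventually_lt_of_lt_liminf hlt] with k hk using hk.le
    have hev : ∀ᶠ k in atTop, ∫⁻ x, F k x ∂μ ≤ c + ε := by
      filter_upwards [hev1, hev2] with k hk1 hk2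
      calc ∫⁻ x, F k x ∂μ
          = ∫⁻ x, G k x ∂μ - (∫⁻ x, G k x ∂μ - ∫⁻ x, F k x ∂μ) :=
            (ENNReal.sub_sub_cancel (hGfin k) (lintegral_mono_ae (hle k))).symm
        _ ≤ (a + δ) - (a - c - δ) := tsub_le_tsub hk1 hk2
        _ ≤ c + δ + δ := by
            rw [tsub_le_iff_right]
            have t1 : a ≤ c + (a - c) := le_add_tsub
            have t2 : a - c ≤ a - c - δ + δ := le_tsub_add
            calc a + δ ≤ (c + (a - c)) + δ := add_le_add_left t1 δ
              _ ≤ (c + (a - c - δ + δ)) + δ := add_le_add_left (add_le_add_right t2 c) δ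
              _ = c + δ + δ + (a - c - δ) := by ring
        _ = c + ε := hδε
    exact limsup_le_of_le (by isBoundedDefault) hev
  exact tendsto_of_le_liminf_of_limsup_le h1 h3

theorem abs_add_rpow_le' {a b q pM : ℝ} (hq0 : 0 ≤ q) (hq : q ≤ pM) :
    |a + b| ^ q ≤ 2 ^ pM * (|a| ^ q + |b| ^ q) := by
  set m := max |a| |b| with hm
  have hm0 : 0 ≤ m := le_max_of_le_left (abs_nonneg a)
  have h1 : |a + b| ≤ 2 * m := by
    calc |a + b| ≤ |a| + |b| := abs_add_le a b
      _ ≤ m + m := add_le_add (le_max_left _ _) (le_max_right _ _)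
      _ = 2 * m := (two_mul m).symm
  have h2 : |a + b| ^ q ≤ (2 * m) ^ q := Real.rpow_le_rpow (abs_nonneg _) h1 hq0
  have h3 : (2 * m) ^ q = 2 ^ q * m ^ q := Real.mul_rpow (by norm_num) hm0
  have h4 : m ^ q ≤ |a| ^ q + |b| ^ q := by
    rcases max_cases |a| |b| with ⟨h, _⟩ | ⟨h, _⟩ <;> rw [hm, h]
    · exact le_add_of_nonneg_right (Real.rpow_nonneg (abs_nonneg _) _)
    · exact le_add_of_nonneg_left (Real.rpow_nonneg (abs_nonneg _) _)
  have h5 : (2:ℝ) ^ q ≤ 2 ^ pM := Real.rpow_le_rpow_of_exponent_le (by norm_num) hq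
  calc |a + b| ^ q ≤ 2 ^ q * m ^ q := by rw [← h3]; exact h2
    _ ≤ 2 ^ pM * (|a| ^ q + |b| ^ q) :=
      mul_le_mul h5 h4 (Real.rpow_nonneg hm0 _) (Real.rpow_nonneg (by norm_num) _)

theorem ofReal_abs_add_rpow_le {a b q pM : ℝ} (hq0 : 0 ≤ q) (hq : q ≤ pM) :
    ENNReal.ofReal (|a + b| ^ q) ≤
      ENNReal.ofReal (2 ^ pM) * (ENNReal.ofReal (|a| ^ q) + ENNReal.ofReal (|b| ^ q)) := by
  refine le_trans (ENNReal.ofReal_le_ofReal (abs_add_rpow_le' hq0 hq)) ?_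
  rw [ENNReal.ofReal_mul (by positivity),
    ENNReal.ofReal_add (Real.rpow_nonneg (abs_nonneg _) _) (Real.rpow_nonneg (abs_nonneg _) _)]

section Aux

variable {N : ℕ} {Ω : Set (EuclideanSpace ℝ (Fin N))} {p : EuclideanSpace ℝ (Fin N) → ℝ}
  {pm pM : ℝ}

theorem measurable_Phi {v : EuclideanSpace ℝ (Fin N) → ℝ} (hv : Measurable v)
    (hp : Measurable p) : Measurable fun x => ENNReal.ofReal (|v x| ^ p x) := by
  measurability

theorem modular_div_eq (Ω : Set (EuclideanSpace ℝ (Fin N)))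
    (p v : EuclideanSpace ℝ (Fin N) → ℝ) {c : ℝ} (hc : 0 < c) :
    modular Ω p (fun x => v x / c) =
      ∫⁻ x in Ω, ENNReal.ofReal (|v x| ^ p x) / ENNReal.ofReal (c ^ p x) := by
  unfold modular
  refine lintegral_congr fun x => ?_
  rw [abs_div, abs_of_pos hc, Real.div_rpow (abs_nonneg _) hc.le,
    ENNReal.ofReal_div_of_pos (Real.rpow_pos_of_pos hc _)]

theorem modular_div_le_one (hΩ : MeasurableSet Ω) (hb : ∀ x ∈ Ω, pm ≤ p x ∧ p x ≤ pM)
    {v : EuclideanSpace ℝ (Fin N) → ℝ} {d : ℝ} (hd0 : 0 < d) (hd1 : d ≤ 1)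
    (h : modular Ω p v ≤ ENNReal.ofReal (d ^ pM)) :
    modular Ω p (fun x => v x / d) ≤ 1 := by
  have hD0 : ENNReal.ofReal (d ^ pM) ≠ 0 := (ENNReal.ofReal_pos.2 (Real.rpow_pos_of_pos hd0 _)).ne'
  have key : modular Ω p (fun x => v x / d) ≤ modular Ω p v / ENNReal.ofReal (d ^ pM) := by
    rw [modular_div_eq Ω p v hd0]
    have hpt : ∀ᵐ x ∂(volume.restrict Ω),
        ENNReal.ofReal (|v x| ^ p x) / ENNReal.ofReal (d ^ p x) ≤
          ENNReal.ofReal (|v x| ^ p x) / ENNReal.ofReal (d ^ pM) := by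
      filter_upwards [ae_restrict_mem hΩ] with x hxΩ
      exact ENNReal.div_le_div_left (ENNReal.ofReal_le_ofReal
        (Real.rpow_le_rpow_of_exponent_ge hd0 hd1 (hb x hxΩ).2)) _
    calc (∫⁻ x in Ω, ENNReal.ofReal (|v x| ^ p x) / ENNReal.ofReal (d ^ p x)) ≤
        ∫⁻ x in Ω, ENNReal.ofReal (|v x| ^ p x) / ENNReal.ofReal (d ^ pM) :=
          lintegral_mono_ae hpt
      _ = modular Ω p v / ENNReal.ofReal (d ^ pM) := by
          simp_rw [div_eq_mul_inv]
          rw [lintegral_mul_const' _ _ (ENNReal.inv_ne_top.2 hD0)]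
          rfl
  refine key.trans ?_
  calc modular Ω p v / ENNReal.ofReal (d ^ pM) ≤
      ENNReal.ofReal (d ^ pM) / ENNReal.ofReal (d ^ pM) := ENNReal.div_le_div_right h _
    _ = 1 := ENNReal.div_self hD0 ENNReal.ofReal_ne_top

theorem luxSet_nonempty (hΩ : MeasurableSet Ω) (hpm1 : 1 ≤ pm)
    (hb : ∀ x ∈ Ω, pm ≤ p x ∧ p x ≤ pM)
    {v : EuclideanSpace ℝ (Fin N) → ℝ} (hfin : modular Ω p v ≠ ∞) :
    {c : ℝ | 0 < c ∧ modular Ω p (fun x => v x / c) ≤ 1}.Nonempty := by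
  set c := (modular Ω p v).toReal + 1 with hcdef
  have hc1 : 1 ≤ c := le_add_of_nonneg_left ENNReal.toReal_nonneg
  have hc0 : 0 < c := lt_of_lt_of_le one_pos hc1
  refine ⟨c, hc0, ?_⟩
  have hC0 : ENNReal.ofReal c ≠ 0 := (ENNReal.ofReal_pos.2 hc0).ne'
  have key : modular Ω p (fun x => v x / c) ≤ modular Ω p v / ENNReal.ofReal c := by
    rw [modular_div_eq Ω p v hc0]
    have hpt : ∀ᵐ x ∂(volume.restrict Ω),
        ENNReal.ofReal (|v x| ^ p x) / ENNReal.ofReal (c ^ p x) ≤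
          ENNReal.ofReal (|v x| ^ p x) / ENNReal.ofReal c := by
      filter_upwards [ae_restrict_mem hΩ] with x hxΩ
      refine ENNReal.div_le_div_left (ENNReal.ofReal_le_ofReal ?_) _
      calc c = c ^ (1:ℝ) := (Real.rpow_one c).symm
        _ ≤ c ^ p x := Real.rpow_le_rpow_of_exponent_le hc1 (le_trans hpm1 (hb x hxΩ).1)
    calc (∫⁻ x in Ω, ENNReal.ofReal (|v x| ^ p x) / ENNReal.ofReal (c ^ p x)) ≤
        ∫⁻ x in Ω, ENNReal.ofReal (|v x| ^ p x) / ENNReal.ofReal c := lintegral_mono_ae hpt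
      _ = modular Ω p v / ENNReal.ofReal c := by
          simp_rw [div_eq_mul_inv]
          rw [lintegral_mul_const' _ _ (ENNReal.inv_ne_top.2 hC0)]
          rfl
  refine key.trans ?_
  have hle : modular Ω p v ≤ ENNReal.ofReal c := by
    rw [← ENNReal.ofReal_toReal hfin]
    exact ENNReal.ofReal_le_ofReal (by rw [hcdef]; linarith)
  calc modular Ω p v / ENNReal.ofReal c ≤ ENNReal.ofReal c / ENNReal.ofReal c :=
      ENNReal.div_le_div_right hle _
    _ = 1 := ENNReal.div_self hC0 ENNReal.ofReal_ne_top

theorem modular_le_of_mem_luxSet (hΩ : MeasurableSet Ω)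
    (hb : ∀ x ∈ Ω, pm ≤ p x ∧ p x ≤ pM)
    {v : EuclideanSpace ℝ (Fin N) → ℝ} {c : ℝ} (hc0 : 0 < c) (hc1 : c ≤ 1)
    (hc : modular Ω p (fun x => v x / c) ≤ 1) :
    modular Ω p v ≤ ENNReal.ofReal (c ^ pm) := by
  have key : modular Ω p v ≤ ENNReal.ofReal (c ^ pm) * modular Ω p (fun x => v x / c) := by
    have hpt : ∀ᵐ x ∂(volume.restrict Ω),
        ENNReal.ofReal (|v x| ^ p x) ≤
          ENNReal.ofReal (c ^ pm) * ENNReal.ofReal (|v x / c| ^ p x) := by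
      filter_upwards [ae_restrict_mem hΩ] with x hxΩ
      have heq : |v x| ^ p x = c ^ p x * |v x / c| ^ p x := by
        rw [abs_div, abs_of_pos hc0, ← Real.mul_rpow hc0.le (div_nonneg (abs_nonneg _) hc0.le),
          mul_div_cancel₀ _ hc0.ne']
      rw [heq, ENNReal.ofReal_mul (Real.rpow_nonneg hc0.le _)]
      exact mul_le_mul_left (ENNReal.ofReal_le_ofReal
        (Real.rpow_le_rpow_of_exponent_ge hc0 hc1 (hb x hxΩ).1)) _
    calc modular Ω p v ≤
        ∫⁻ x in Ω, ENNReal.ofReal (c ^ pm) * ENNReal.ofReal (|v x / c| ^ p x) :=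
          lintegral_mono_ae hpt
      _ = ENNReal.ofReal (c ^ pm) * modular Ω p (fun x => v x / c) := by
          rw [lintegral_const_mul' _ _ ENNReal.ofReal_ne_top]
          rfl
  calc modular Ω p v ≤ ENNReal.ofReal (c ^ pm) * modular Ω p (fun x => v x / c) := key
    _ ≤ ENNReal.ofReal (c ^ pm) * 1 := mul_le_mul_right hc _
    _ = ENNReal.ofReal (c ^ pm) := mul_one _

end Aux

section Aux2

variable {N : ℕ} {Ω : Set (EuclideanSpace ℝ (Fin N))} {p : EuclideanSpace ℝ (Fin N) → ℝ}
  {pm pM : ℝ}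

theorem cheb_bound (hΩ : MeasurableSet Ω) (hpm0 : 0 < pm)
    (hb : ∀ x ∈ Ω, pm ≤ p x ∧ p x ≤ pM)
    {v : EuclideanSpace ℝ (Fin N) → ℝ} (hv : Measurable v) (hp : Measurable p)
    {ε : ℝ} (hε : 0 < ε) :
    (volume.restrict Ω) {x | ε ≤ |v x|} ≤
      modular Ω p v / ENNReal.ofReal (min (ε ^ pm) (ε ^ pM)) := by
  set δ := min (ε ^ pm) (ε ^ pM) with hδdef
  have hδ0 : 0 < δ := lt_min (Real.rpow_pos_of_pos hε _) (Real.rpow_pos_of_pos hε _)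
  have hD0 : ENNReal.ofReal δ ≠ 0 := (ENNReal.ofReal_pos.2 hδ0).ne'
  have hmono : (volume.restrict Ω) {x | ε ≤ |v x|} ≤
      (volume.restrict Ω) {x | ENNReal.ofReal δ ≤ ENNReal.ofReal (|v x| ^ p x)} := by
    refine measure_mono_ae ?_
    filter_upwards [ae_restrict_mem hΩ] with x hxΩ hx
    have hq := hb x hxΩ
    have hq0 : 0 ≤ p x := le_trans hpm0.le hq.1
    have hδle : δ ≤ ε ^ p x := by
      rcases le_or_gt 1 ε with h1 | h1
      · calc δ ≤ ε ^ pm := min_le_left _ _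
          _ ≤ ε ^ p x := Real.rpow_le_rpow_of_exponent_le h1 hq.1
      · calc δ ≤ ε ^ pM := min_le_right _ _
          _ ≤ ε ^ p x := Real.rpow_le_rpow_of_exponent_ge hε h1.le hq.2
    have : δ ≤ |v x| ^ p x := hδle.trans (Real.rpow_le_rpow hε.le hx hq0)
    exact ENNReal.ofReal_le_ofReal this
  have hcheb := mul_meas_ge_le_lintegral₀
    ((measurable_Phi hv hp).aemeasurable (μ := volume.restrict Ω)) (ENNReal.ofReal δ)
  refine hmono.trans ?_
  exact (ENNReal.le_div_iff_mul_le (Or.inl hD0) (Or.inl ENNReal.ofReal_ne_top)).2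
    (by rwa [mul_comm] at hcheb)

theorem lux_tendsto_iff_modular (hΩ : MeasurableSet Ω) (hpm : 1 < pm)
    (hb : ∀ x ∈ Ω, pm ≤ p x ∧ p x ≤ pM)
    {v : ℕ → EuclideanSpace ℝ (Fin N) → ℝ}
    (hvfin : ∀ k, modular Ω p (v k) ≠ ∞) :
    Tendsto (fun k => luxNorm Ω p (v k)) atTop (𝓝 0) ↔
      Tendsto (fun k => modular Ω p (v k)) atTop (𝓝 0) := by
  have hpm0 : (0:ℝ) < pm := lt_trans one_pos hpm
  constructor
  · intro h
    refine ENNReal.tendsto_nhds_zero.2 fun ε hε => ?_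
    set e := min ε 1 with hedef
    have he0 : 0 < e := lt_min hε one_pos
    have hetop : e ≠ ∞ := ne_top_of_le_ne_top ENNReal.one_ne_top (min_le_right _ _)
    have he1 : e ≤ 1 := min_le_right _ _
    set δ := e.toReal ^ pm⁻¹ with hδdef
    have het0 : 0 < e.toReal := ENNReal.toReal_pos he0.ne' hetop
    have hδ0 : 0 < δ := Real.rpow_pos_of_pos het0 _
    have hδ1 : δ ≤ 1 := by
      refine Real.rpow_le_one het0.le ?_ (by positivity)
      calc e.toReal ≤ (1:ℝ≥0∞).toReal := ENNReal.toReal_mono ENNReal.one_ne_top he1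
        _ = 1 := by simp
    have hδpm : δ ^ pm = e.toReal := by
      rw [hδdef, ← Real.rpow_mul het0.le, inv_mul_cancel₀ hpm0.ne', Real.rpow_one]
    filter_upwards [h.eventually (gt_mem_nhds hδ0)] with k hk
    obtain ⟨c, ⟨hc0, hcball⟩, hcδ⟩ :=
      exists_lt_of_csInf_lt (luxSet_nonempty hΩ hpm.le hb (hvfin k)) hk
    have hm := modular_le_of_mem_luxSet hΩ hb hc0 (hcδ.le.trans hδ1) hcball
    calc modular Ω p (v k) ≤ ENNReal.ofReal (c ^ pm) := hm
      _ ≤ ENNReal.ofReal (δ ^ pm) :=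
        ENNReal.ofReal_le_ofReal (Real.rpow_le_rpow hc0.le hcδ.le hpm0.le)
      _ = e := by rw [hδpm, ENNReal.ofReal_toReal hetop]
      _ ≤ ε := min_le_left _ _
  · intro h
    refine Metric.tendsto_atTop.2 fun ε hε => ?_
    set d := min (ε / 2) 1 with hddef
    have hd0 : 0 < d := lt_min (by linarith) one_pos
    have hd1 : d ≤ 1 := min_le_right _ _
    have hdε : d < ε := lt_of_le_of_lt (min_le_left _ _) (by linarith)
    have hev := h.eventually (gt_mem_nhds
      (show (0:ℝ≥0∞) < ENNReal.ofReal (d ^ pM) from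
        ENNReal.ofReal_pos.2 (Real.rpow_pos_of_pos hd0 _)))
    obtain ⟨K, hK⟩ := eventually_atTop.1 hev
    refine ⟨K, fun n hn => ?_⟩
    have hmem : modular Ω p (fun x => v n x / d) ≤ 1 :=
      modular_div_le_one hΩ hb hd0 hd1 (hK n hn).le
    have hlux_le : luxNorm Ω p (v n) ≤ d :=
      csInf_le ⟨0, fun c hc => hc.1.le⟩ ⟨hd0, hmem⟩
    have hlux_0 : 0 ≤ luxNorm Ω p (v n) := Real.sInf_nonneg fun c hc => hc.1.le
    rw [Real.dist_eq, sub_zero, abs_of_nonneg hlux_0]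
    exact lt_of_le_of_lt hlux_le hdε

theorem modular_sub_le (hΩ : MeasurableSet Ω) (hpm0 : 0 ≤ pm)
    (hb : ∀ x ∈ Ω, pm ≤ p x ∧ p x ≤ pM)
    {a b : EuclideanSpace ℝ (Fin N) → ℝ} (ha : Measurable a) (hp : Measurable p) :
    modular Ω p (fun x => a x - b x) ≤
      ENNReal.ofReal (2 ^ pM) * (modular Ω p a + modular Ω p b) := by
  have hpt : ∀ᵐ x ∂(volume.restrict Ω),
      ENNReal.ofReal (|a x - b x| ^ p x) ≤
        ENNReal.ofReal (2 ^ pM) *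
          (ENNReal.ofReal (|a x| ^ p x) + ENNReal.ofReal (|b x| ^ p x)) := by
    filter_upwards [ae_restrict_mem hΩ] with x hx
    have h := ofReal_abs_add_rpow_le (a := a x) (b := -(b x))
      (le_trans hpm0 (hb x hx).1) (hb x hx).2
    simpa [sub_eq_add_neg] using h
  calc modular Ω p (fun x => a x - b x) ≤
      ∫⁻ x in Ω, ENNReal.ofReal (2 ^ pM) *
        (ENNReal.ofReal (|a x| ^ p x) + ENNReal.ofReal (|b x| ^ p x)) :=
        lintegral_mono_ae hpt
    _ = ENNReal.ofReal (2 ^ pM) * (modular Ω p a + modular Ω p b) := by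
        rw [lintegral_const_mul' _ _ ENNReal.ofReal_ne_top,
          lintegral_add_left (measurable_Phi ha hp)]
        rfl

theorem tendsto_Phi_pt {q : ℝ} (hq : 0 ≤ q) {s : ℕ → ℝ} {t : ℝ}
    (hs : Tendsto s atTop (𝓝 t)) :
    Tendsto (fun i => ENNReal.ofReal (|s i| ^ q)) atTop (𝓝 (ENNReal.ofReal (|t| ^ q))) := by
  have h1 : Tendsto (fun i => |s i|) atTop (𝓝 |t|) := hs.abs
  have h2 : Tendsto (fun i => |s i| ^ q) atTop (𝓝 (|t| ^ q)) :=
    ((Real.continuousAt_rpow_const _ q (Or.inr hq)).tendsto).comp h1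
  exact (ENNReal.continuous_ofReal.tendsto _).comp h2

end Aux2

/-- Norm convergence is equivalent to convergence in measure plus modular convergence. -/
theorem norm_iff_measure_and_modular {N : ℕ} (Ω : Set (EuclideanSpace ℝ (Fin N)))
    (hΩ : MeasurableSet Ω) (hΩfin : volume Ω < ⊤)
    (p : EuclideanSpace ℝ (Fin N) → ℝ) (hp : Measurable p)
    (pm pM : ℝ) (hpm : 1 < pm) (hb : ∀ x ∈ Ω, pm ≤ p x ∧ p x ≤ pM)
    (u : EuclideanSpace ℝ (Fin N) → ℝ) (uk : ℕ → EuclideanSpace ℝ (Fin N) → ℝ)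
    (hu : Measurable u) (huk : ∀ k, Measurable (uk k))
    (hρu : modular Ω p u < ⊤) (hρuk : ∀ k, modular Ω p (uk k) < ⊤) :
    Tendsto (fun k => luxNorm Ω p (fun x => uk k x - u x)) atTop (𝓝 0) ↔
      (TendstoInMeasure (volume.restrict Ω) uk atTop u ∧
        Tendsto (fun k => modular Ω p (uk k)) atTop (𝓝 (modular Ω p u))) := by
  have hpm0 : (0:ℝ) < pm := lt_trans one_pos hpm
  set c2 := ENNReal.ofReal (2 ^ pM) with hc2def
  have hc2top : c2 ≠ ∞ := ENNReal.ofReal_ne_top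
  have hvm : ∀ k, Measurable fun x => uk k x - u x := fun k => (huk k).sub hu
  have hvfin : ∀ k, modular Ω p (fun x => uk k x - u x) ≠ ∞ := fun k => by
    refine ne_top_of_le_ne_top ?_ (modular_sub_le hΩ hpm0.le hb (huk k) hp)
    exact ENNReal.mul_ne_top hc2top (ENNReal.add_ne_top.2 ⟨(hρuk k).ne, hρu.ne⟩)
  have key1 : Tendsto (fun k => luxNorm Ω p (fun x => uk k x - u x)) atTop (𝓝 0) ↔
      Tendsto (fun k => modular Ω p (fun x => uk k x - u x)) atTop (𝓝 0) :=
    lux_tendsto_iff_modular hΩ hpm hb hvfin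
  -- modular of differences → 0 implies convergence in measure
  have keyMeas : Tendsto (fun k => modular Ω p (fun x => uk k x - u x)) atTop (𝓝 0) →
      TendstoInMeasure (volume.restrict Ω) uk atTop u := by
    intro h
    refine tendstoInMeasure_iff_dist.2 fun ε hε => ?_
    set D := ENNReal.ofReal (min (ε ^ pm) (ε ^ pM)) with hDdef
    have hD0 : D ≠ 0 := (ENNReal.ofReal_pos.2
      (lt_min (Real.rpow_pos_of_pos hε _) (Real.rpow_pos_of_pos hε _))).ne'
    have htend : Tendsto (fun k => modular Ω p (fun x => uk k x - u x) / D) atTop (𝓝 0) := by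
      have := ENNReal.Tendsto.mul_const h (Or.inr (ENNReal.inv_ne_top.2 hD0))
      simpa [div_eq_mul_inv] using this
    refine tendsto_of_tendsto_of_tendsto_of_le_of_le tendsto_const_nhds htend
      (fun k => zero_le) (fun k => ?_)
    have := cheb_bound hΩ hpm0 hb (hvm k) hp hε
    simpa [Real.dist_eq, hDdef] using this
  constructor
  · rintro h
    have hmod0 := key1.mp h
    have hμmeas := keyMeas hmod0
    refine ⟨hμmeas, ?_⟩
    refine tendsto_of_subseq_tendsto fun ns hns => ?_
    have hsub : TendstoInMeasure (volume.restrict Ω) (fun i => uk (ns i)) atTop u :=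
      fun ε hε => (hμmeas ε hε).comp hns
    obtain ⟨ms, hmono, hae⟩ := hsub.exists_seq_tendsto_ae
    refine ⟨ms, ?_⟩
    set j : ℕ → ℕ := fun i => ns (ms i) with hjdef
    have hj : Tendsto j atTop atTop := hns.comp hmono.tendsto_atTop
    have main := lintegral_tendsto_of_dominated' (μ := volume.restrict Ω)
      (F := fun i x => ENNReal.ofReal (|uk (j i) x| ^ p x))
      (f := fun x => ENNReal.ofReal (|u x| ^ p x))
      (G := fun i x => c2 * (ENNReal.ofReal (|uk (j i) x - u x| ^ p x)
        + ENNReal.ofReal (|u x| ^ p x)))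
      (g := fun x => c2 * (0 + ENNReal.ofReal (|u x| ^ p x)))
      (fun i => measurable_Phi (huk (j i)) hp)
      (measurable_Phi hu hp)
      (fun i => (measurable_const.mul ((measurable_Phi ((huk (j i)).sub hu) hp).add
        (measurable_Phi hu hp))))
      ?_ ?_ ?_ ?_ ?_ ?_ ?_
    · exact main
    · -- domination
      intro i
      filter_upwards [ae_restrict_mem hΩ] with x hx
      have hq := hb x hx
      have h := ofReal_abs_add_rpow_le (a := uk (j i) x - u x) (b := u x)
        (le_trans hpm0.le hq.1) hq.2
      simpa [sub_add_cancel] using h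
    · -- F tendsto
      filter_upwards [hae, ae_restrict_mem hΩ] with x hx hxΩ
      exact tendsto_Phi_pt (le_trans hpm0.le (hb x hxΩ).1) hx
    · -- G tendsto
      filter_upwards [hae, ae_restrict_mem hΩ] with x hx hxΩ
      have hq := hb x hxΩ
      have hq0 : 0 < p x := lt_of_lt_of_le hpm0 hq.1
      have h0 : Tendsto (fun i => uk (j i) x - u x) atTop (𝓝 0) := by
        simpa using hx.sub (tendsto_const_nhds (x := u x))
      have h1 : Tendsto (fun i => ENNReal.ofReal (|uk (j i) x - u x| ^ p x)) atTop
          (𝓝 0) := by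
        have := tendsto_Phi_pt hq0.le h0
        simpa [Real.zero_rpow hq0.ne'] using this
      exact ENNReal.Tendsto.const_mul (h1.add tendsto_const_nhds) (Or.inr hc2top)
    · -- g finite pointwise
      exact Eventually.of_forall fun x => ENNReal.mul_ne_top hc2top
        (by simp [ENNReal.ofReal_ne_top])
    · -- ∫ G finite
      intro i
      have : (∫⁻ x in Ω, c2 * (ENNReal.ofReal (|uk (j i) x - u x| ^ p x)
          + ENNReal.ofReal (|u x| ^ p x)))
          = c2 * (modular Ω p (fun x => uk (j i) x - u x) + modular Ω p u) := by
        rw [lintegral_const_mul' _ _ hc2top,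
          lintegral_add_left (measurable_Phi (v := fun x => uk (j i) x - u x) ((huk (j i)).sub hu) hp)]
        rfl
      rw [this]
      exact ENNReal.mul_ne_top hc2top (ENNReal.add_ne_top.2 ⟨hvfin _, hρu.ne⟩)
    · -- ∫ g finite
      have : (∫⁻ x in Ω, c2 * ((0:ℝ≥0∞) + ENNReal.ofReal (|u x| ^ p x)))
          = c2 * modular Ω p u := by
        simp_rw [zero_add]
        rw [lintegral_const_mul' _ _ hc2top]
        rfl
      rw [this]
      exact ENNReal.mul_ne_top hc2top hρu.ne
    · -- ∫ G tendsto ∫ g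
      have hGint : ∀ i, (∫⁻ x in Ω, c2 * (ENNReal.ofReal (|uk (j i) x - u x| ^ p x)
          + ENNReal.ofReal (|u x| ^ p x)))
          = c2 * (modular Ω p (fun x => uk (j i) x - u x) + modular Ω p u) := fun i => by
        rw [lintegral_const_mul' _ _ hc2top,
          lintegral_add_left (measurable_Phi (v := fun x => uk (j i) x - u x) ((huk (j i)).sub hu) hp)]
        rfl
      have hgint : (∫⁻ x in Ω, c2 * ((0:ℝ≥0∞) + ENNReal.ofReal (|u x| ^ p x)))
          = c2 * (0 + modular Ω p u) := by
        simp_rw [zero_add]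
        rw [lintegral_const_mul' _ _ hc2top]
        rfl
      simp_rw [hGint, hgint]
      refine ENNReal.Tendsto.const_mul ?_ (Or.inr hc2top)
      exact (hmod0.comp hj).add tendsto_const_nhds
  · rintro ⟨hμmeas, hmodconv⟩
    refine key1.mpr ?_
    refine tendsto_of_subseq_tendsto fun ns hns => ?_
    have hsub : TendstoInMeasure (volume.restrict Ω) (fun i => uk (ns i)) atTop u :=
      fun ε hε => (hμmeas ε hε).comp hns
    obtain ⟨ms, hmono, hae⟩ := hsub.exists_seq_tendsto_ae
    refine ⟨ms, ?_⟩
    set j : ℕ → ℕ := fun i => ns (ms i) with hjdef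
    have hj : Tendsto j atTop atTop := hns.comp hmono.tendsto_atTop
    have main := lintegral_tendsto_of_dominated' (μ := volume.restrict Ω)
      (F := fun i x => ENNReal.ofReal (|uk (j i) x - u x| ^ p x))
      (f := fun _ => (0:ℝ≥0∞))
      (G := fun i x => c2 * (ENNReal.ofReal (|uk (j i) x| ^ p x)
        + ENNReal.ofReal (|u x| ^ p x)))
      (g := fun x => c2 * (ENNReal.ofReal (|u x| ^ p x) + ENNReal.ofReal (|u x| ^ p x)))
      (fun i => measurable_Phi ((huk (j i)).sub hu) hp)
      measurable_const
      (fun i => (measurable_const.mul ((measurable_Phi (huk (j i)) hp).add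
        (measurable_Phi hu hp))))
      ?_ ?_ ?_ ?_ ?_ ?_ ?_
    · have hzero : (∫⁻ (_ : EuclideanSpace ℝ (Fin N)) in Ω, (0:ℝ≥0∞)) = 0 := lintegral_zero
      rw [hzero] at main
      exact main
    · -- domination
      intro i
      filter_upwards [ae_restrict_mem hΩ] with x hx
      have hq := hb x hx
      have h := ofReal_abs_add_rpow_le (a := uk (j i) x) (b := -(u x))
        (le_trans hpm0.le hq.1) hq.2
      simpa [sub_eq_add_neg] using h
    · -- F tendsto to 0
      filter_upwards [hae, ae_restrict_mem hΩ] with x hx hxΩ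
      have hq0 : 0 < p x := lt_of_lt_of_le hpm0 (hb x hxΩ).1
      have h0 : Tendsto (fun i => uk (j i) x - u x) atTop (𝓝 0) := by
        simpa using hx.sub (tendsto_const_nhds (x := u x))
      have := tendsto_Phi_pt hq0.le h0
      simpa [Real.zero_rpow hq0.ne'] using this
    · -- G tendsto
      filter_upwards [hae, ae_restrict_mem hΩ] with x hx hxΩ
      have hq0 : 0 ≤ p x := le_trans hpm0.le (hb x hxΩ).1
      exact ENNReal.Tendsto.const_mul ((tendsto_Phi_pt hq0 hx).add tendsto_const_nhds)
        (Or.inr hc2top)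
    · exact Eventually.of_forall fun x => ENNReal.mul_ne_top hc2top
        (by simp [ENNReal.ofReal_ne_top])
    · -- ∫ G finite
      intro i
      have : (∫⁻ x in Ω, c2 * (ENNReal.ofReal (|uk (j i) x| ^ p x)
          + ENNReal.ofReal (|u x| ^ p x)))
          = c2 * (modular Ω p (uk (j i)) + modular Ω p u) := by
        rw [lintegral_const_mul' _ _ hc2top,
          lintegral_add_left (measurable_Phi (huk (j i)) hp)]
        rfl
      rw [this]
      exact ENNReal.mul_ne_top hc2top (ENNReal.add_ne_top.2 ⟨(hρuk _).ne, hρu.ne⟩)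
    · -- ∫ g finite
      have : (∫⁻ x in Ω, c2 * (ENNReal.ofReal (|u x| ^ p x) + ENNReal.ofReal (|u x| ^ p x)))
          = c2 * (modular Ω p u + modular Ω p u) := by
        rw [lintegral_const_mul' _ _ hc2top, lintegral_add_left (measurable_Phi hu hp)]
        rfl
      rw [this]
      exact ENNReal.mul_ne_top hc2top (ENNReal.add_ne_top.2 ⟨hρu.ne, hρu.ne⟩)
    · -- ∫ G tendsto ∫ g
      have hGint : ∀ i, (∫⁻ x in Ω, c2 * (ENNReal.ofReal (|uk (j i) x| ^ p x)
          + ENNReal.ofReal (|u x| ^ p x)))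
          = c2 * (modular Ω p (uk (j i)) + modular Ω p u) := fun i => by
        rw [lintegral_const_mul' _ _ hc2top,
          lintegral_add_left (measurable_Phi (huk (j i)) hp)]
        rfl
      have hgint : (∫⁻ x in Ω, c2 * (ENNReal.ofReal (|u x| ^ p x)
          + ENNReal.ofReal (|u x| ^ p x)))
          = c2 * (modular Ω p u + modular Ω p u) := by
        rw [lintegral_const_mul' _ _ hc2top, lintegral_add_left (measurable_Phi hu hp)]
        rfl
      simp_rw [hGint, hgint]
      refine ENNReal.Tendsto.const_mul ?_ (Or.inr hc2top)
      exact (hmodconv.comp hj).add tendsto_const_nhds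
end
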